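/- Let τ > τ₁ (where τ₁ tanh τ₁ = 1) and let ν > 0 satisfy tanh ν = ν/(τ tanh τ). Then φ(x) = ν cosh(ν x) − τ sinh(ν x) tanh(τ x) satisfies φ'' + λ e^u φ − ν² φ = 0 on (-1,1), φ(±1) = 0, and φ(x) > 0 for −1 < x < 1, where λ = 2τ²/cosh²τ and u(x) = 2 log(cosh τ/cosh(τ x)). -/

import Mathlib

/-!
The function `w = tanh (τ x)` solves the Riccati equation `w' = τ (1 - w²)`, and
`λ e^u = 2 τ² / cosh² (τ x) = 2 τ² (1 - w²)`. Hence `φ = (d/dx - τ w) sinh (ν x)` is the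
Darboux transform of `sinh (ν x)`, and the Darboux transformation turns solutions of
`f'' = ν² f` into solutions of `g'' + 2 τ² (1 - w²) g = ν² g`. The dispersion relation
`τ tanh τ · tanh ν = ν` is exactly `φ (±1) = 0`, and since
`tanh (ν x) tanh (τ x) < tanh ν tanh τ` for `|x| < 1`, also `φ > 0` there.
-/

open Real Set

namespace Real

theorem strictMono_tanh : StrictMono tanh := by
  intro a b hab
  by_contra! h
  have := artanh_le_artanh (neg_one_lt_tanh b) (tanh_lt_one a) h
  rw [artanh_tanh, artanh_tanh] at this
  exact this.not_gt hab

theorem abs_tanh (x : ℝ) : |tanh x| = tanh |x| := by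
  rcases abs_cases x with ⟨hx, h0⟩ | ⟨hx, h0⟩
  · rw [hx, abs_of_nonneg]
    simpa using strictMono_tanh.monotone h0
  · rw [hx, tanh_neg, abs_of_neg]
    simpa using strictMono_tanh h0

theorem abs_tanh_lt_tanh {a b : ℝ} (h : |a| < b) : |tanh a| < tanh b :=
  abs_tanh a ▸ strictMono_tanh h

theorem tanh_mul_cosh (x : ℝ) : tanh x * cosh x = sinh x := by
  rw [tanh_eq_sinh_div_cosh, div_mul_cancel₀ _ (cosh_pos x).ne']

theorem one_sub_tanh_sq (x : ℝ) : 1 - tanh x ^ 2 = (cosh x ^ 2)⁻¹ := by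
  have := cosh_sq_sub_sinh_sq x
  rw [tanh_eq_sinh_div_cosh]
  field_simp
  linarith

theorem hasDerivAt_tanh (x : ℝ) : HasDerivAt tanh (1 - tanh x ^ 2) x := by
  have h := (hasDerivAt_sinh x).fun_div (hasDerivAt_cosh x) (cosh_pos x).ne'
  rw [show tanh = fun y => sinh y / cosh y from funext tanh_eq_sinh_div_cosh]
  refine h.congr_deriv ?_
  field_simp

theorem hasDerivAt_tanh_mul (τ x : ℝ) :
    HasDerivAt (fun x => tanh (τ * x)) (τ * (1 - tanh (τ * x) ^ 2)) x :=
  ((hasDerivAt_tanh (τ * x)).comp x ((hasDerivAt_id' x).const_mul τ)).congr_deriv (by ring)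

theorem hasDerivAt_sinh_mul (ν x : ℝ) :
    HasDerivAt (fun x => sinh (ν * x)) (ν * cosh (ν * x)) x :=
  ((hasDerivAt_id' x).const_mul ν).sinh.congr_deriv (by ring)

theorem hasDerivAt_mul_cosh_mul (ν x : ℝ) :
    HasDerivAt (fun x => ν * cosh (ν * x)) (ν ^ 2 * sinh (ν * x)) x :=
  (((hasDerivAt_id' x).const_mul ν).cosh.const_mul ν).congr_deriv (by ring)

end Real

theorem deriv_deriv_darboux {f f' w : ℝ → ℝ} {c τ : ℝ} (hf : ∀ x, HasDerivAt f (f' x) x)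
    (hf' : ∀ x, HasDerivAt f' (c * f x) x) (hw : ∀ x, HasDerivAt w (τ * (1 - w x ^ 2)) x)
    (x : ℝ) :
    deriv (deriv fun x => f' x - τ * w x * f x) x
      + 2 * τ ^ 2 * (1 - w x ^ 2) * (f' x - τ * w x * f x) = c * (f' x - τ * w x * f x) := by
  have hg : deriv (fun x => f' x - τ * w x * f x) =
      fun x => c * f x - τ ^ 2 * (1 - w x ^ 2) * f x - τ * w x * f' x := by
    funext x
    refine HasDerivAt.deriv (((hf' x).sub (((hw x).const_mul τ).mul (hf x))).congr_deriv ?_)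
    ring
  have hg' : HasDerivAt (deriv fun x => f' x - τ * w x * f x)
      (c * f' x - 2 * τ ^ 2 * (1 - w x ^ 2) * f' x
        + 2 * τ ^ 3 * w x * (1 - w x ^ 2) * f x - c * τ * w x * f x) x := by
    rw [hg]
    have hw2 := ((hw x).fun_pow 2).const_sub 1
    exact ((((hf x).const_mul c).sub ((hw2.const_mul (τ ^ 2)).mul (hf x))).sub
      (((hw x).const_mul τ).mul (hf' x))).congr_deriv (by ring)
  rw [hg'.deriv]
  ring

theorem tanh_mul_mul_tanh_mul_lt {τ ν x : ℝ} (hτ : 0 < τ) (hν : 0 < ν) (hx : |x| < 1) :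
    tanh (ν * x) * tanh (τ * x) < tanh ν * tanh τ := by
  have hν' : |tanh (ν * x)| < tanh ν :=
    abs_tanh_lt_tanh (by rw [abs_mul, abs_of_pos hν]; nlinarith [abs_nonneg x])
  have hτ' : |tanh (τ * x)| ≤ tanh τ :=
    (abs_tanh_lt_tanh (by rw [abs_mul, abs_of_pos hτ]; nlinarith [abs_nonneg x])).le
  have htτ : 0 < tanh τ := by simpa using strictMono_tanh hτ
  calc tanh (ν * x) * tanh (τ * x) ≤ |tanh (ν * x)| * |tanh (τ * x)| := by
        rw [← abs_mul]; exact le_abs_self _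
    _ ≤ |tanh (ν * x)| * tanh τ := by gcongr
    _ < tanh ν * tanh τ := by gcongr

theorem eigenfunction_negative_eigenvalue_general (τ₁ τ ν : ℝ) (hτ₁ : 0 < τ₁)
    (hτ : τ₁ < τ) (hν : 0 < ν)
    (hνeq : Real.tanh ν = ν / (τ * Real.tanh τ))
    (lam : ℝ) (hlam : lam = 2 * τ ^ 2 / Real.cosh τ ^ 2)
    (u : ℝ → ℝ) (hu : ∀ x, u x = 2 * Real.log (Real.cosh τ / Real.cosh (τ * x)))
    (φ : ℝ → ℝ)
    (hφ : ∀ x, φ x = ν * Real.cosh (ν * x) - τ * Real.sinh (ν * x) * Real.tanh (τ * x)) :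
    (∀ x ∈ Set.Ioo (-1 : ℝ) 1,
      deriv (deriv φ) x + lam * Real.exp (u x) * φ x - ν ^ 2 * φ x = 0) ∧
    φ (-1) = 0 ∧ φ 1 = 0 ∧
    (∀ x ∈ Set.Ioo (-1 : ℝ) 1, 0 < φ x) := by
  have hτ0 : 0 < τ := hτ₁.trans hτ
  have htanh : 0 < tanh τ := by simpa using strictMono_tanh hτ0
  have hdisp : τ * tanh τ * tanh ν = ν := by
    rw [hνeq]; field_simp
  have hpot : ∀ x, lam * exp (u x) = 2 * τ ^ 2 * (1 - tanh (τ * x) ^ 2) := by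
    intro x
    have := (cosh_pos τ).ne'
    rw [hlam, hu, one_sub_tanh_sq, mul_comm 2 (log _), exp_mul, exp_log (by positivity)]
    norm_cast
    field_simp
  have hφ_darboux : φ = fun x => ν * cosh (ν * x) - τ * tanh (τ * x) * sinh (ν * x) := by
    funext x; rw [hφ]; ring
  refine ⟨fun x _ => ?_, ?_, ?_, fun x hx => ?_⟩
  · have := deriv_deriv_darboux (hasDerivAt_sinh_mul ν) (hasDerivAt_mul_cosh_mul ν)
      (hasDerivAt_tanh_mul τ) x
    rw [hpot, hφ_darboux]
    linear_combination this
  · rw [hφ]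
    simp only [mul_neg, mul_one, cosh_neg, sinh_neg, tanh_neg, ← tanh_mul_cosh ν]
    linear_combination (-cosh ν) * hdisp
  · rw [hφ]
    simp only [mul_one, ← tanh_mul_cosh ν]
    linear_combination (-cosh ν) * hdisp
  · have hlt := tanh_mul_mul_tanh_mul_lt hτ0 hν (abs_lt.2 hx)
    have hpos := mul_pos (cosh_pos (ν * x)) (mul_pos hτ0 (sub_pos.2 hlt))
    rw [hφ, ← tanh_mul_cosh (ν * x)]
    linear_combination hpos + cosh (ν * x) * hdisp

theorem eigenfunction_negative_eigenvalue (τ₁ τ ν : ℝ) (hτ₁ : 0 < τ₁)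
    (h1 : τ₁ * Real.tanh τ₁ = 1) (hτ : τ₁ < τ) (hν : 0 < ν)
    (hνeq : Real.tanh ν = ν / (τ * Real.tanh τ))
    (lam : ℝ) (hlam : lam = 2 * τ ^ 2 / Real.cosh τ ^ 2)
    (u : ℝ → ℝ) (hu : ∀ x, u x = 2 * Real.log (Real.cosh τ / Real.cosh (τ * x)))
    (φ : ℝ → ℝ)
    (hφ : ∀ x, φ x = ν * Real.cosh (ν * x) - τ * Real.sinh (ν * x) * Real.tanh (τ * x)) :
    (∀ x ∈ Set.Ioo (-1 : ℝ) 1,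
      deriv (deriv φ) x + lam * Real.exp (u x) * φ x - ν ^ 2 * φ x = 0) ∧
    φ (-1) = 0 ∧ φ 1 = 0 ∧
    (∀ x ∈ Set.Ioo (-1 : ℝ) 1, 0 < φ x) :=
  eigenfunction_negative_eigenvalue_general τ₁ τ ν hτ₁ hτ hν hνeq lam hlam u hu φ hφ
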